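/- arXiv:1803.05284 — 3 statements merged into one kernel-verified Lean document; each statement's English description precedes it below -/
import Mathlib

section
/- With p₁, p₂, … i.i.d. from the mixture π₀·Uniform(0,1) + (1−π₀)·F_{p*} and η ∈ (0,1), the quantile estimator π̃₀^{(m)} = min(1, (Σ_{i=1}^m 1{pᵢ ≥ η}) / (m(1−η))) satisfies liminf_{m→∞} π̃₀^{(m)} ≥ π₀ almost surely; i.e., the estimator is an asymptotic upper bound for the true null proportion π₀. -/
/-!
The strong law of large numbers, applied to the indicators `1{pᵢ ≥ η}`, makes the empirical
frequency of `{pᵢ ≥ η}` converge almost surely to `P(p₁ ≥ η) = π₀ (1 - η) + (1 - π₀) ν [η, ∞)`.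
Dropping the nonnegative alternative term, the limit of the estimator,
`min 1 (P(p₁ ≥ η) / (1 - η))`, is at least `π₀`.
-/

open MeasureTheory ProbabilityTheory Filter Topology Finset

theorem ae_tendsto_empirical_frequency {Ω α : Type*} [MeasurableSpace Ω] [MeasurableSpace α]
    {P : Measure Ω} [IsFiniteMeasure P] {μ : Measure α} {p : ℕ → Ω → α}
    (hmeas : ∀ i, Measurable (p i)) (hindep : Pairwise fun i j => p i ⟂ᵢ[P] p j)
    (hlaw : ∀ i, P.map (p i) = μ) {s : Set α} (hs : MeasurableSet s) :
    ∀ᵐ ω ∂P, Tendsto (fun m : ℕ => (∑ i ∈ range m, s.indicator (1 : α → ℝ) (p i ω)) / m) atTop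
      (𝓝 (μ.real s)) := by
  have hind : Measurable (s.indicator (1 : α → ℝ)) := measurable_const.indicator hs
  have hint : Integrable (s.indicator 1 ∘ p 0) P :=
    .of_bound (hind.comp (hmeas 0)).aestronglyMeasurable 1
      (.of_forall fun ω => norm_indicator_le_norm_self 1 (p 0 ω) |>.trans (by simp))
  have hmean : P[s.indicator 1 ∘ p 0] = μ.real s := by
    rw [Function.comp_def, ← hlaw 0,
      ← integral_map (hmeas 0).aemeasurable hind.aestronglyMeasurable, integral_indicator_one hs]
  have hident : ∀ i, IdentDistrib (s.indicator 1 ∘ p i) (s.indicator 1 ∘ p 0) P P := fun i =>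
    ⟨(hind.comp (hmeas i)).aemeasurable, (hind.comp (hmeas 0)).aemeasurable, by
      rw [← Measure.map_map hind (hmeas i), ← Measure.map_map hind (hmeas 0), hlaw, hlaw]⟩
  rw [← hmean]
  exact strong_law_ae_real (fun i => s.indicator 1 ∘ p i) hint
    (fun i j hij => (hindep hij).comp hind hind) hident

theorem volume_restrict_unitInterval_Ici {η : ℝ} (hη : 0 ≤ η) :
    volume.restrict (Set.Icc (0 : ℝ) 1) (Set.Ici η) = ENNReal.ofReal (1 - η) := by
  have hinter : Set.Ici η ∩ Set.Icc 0 1 = Set.Icc η 1 := by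
    ext x
    simp only [Set.mem_inter_iff, Set.mem_Ici, Set.mem_Icc]
    grind
  rw [Measure.restrict_apply measurableSet_Ici, hinter, Real.volume_Icc]

theorem ofReal_mul_le_mixture_Ici {π₀ η : ℝ} (hπ₀ : 0 ≤ π₀) (hη : 0 ≤ η) (ν : Measure ℝ) :
    ENNReal.ofReal (π₀ * (1 - η)) ≤ (ENNReal.ofReal π₀ • volume.restrict (Set.Icc (0 : ℝ) 1)
      + ENNReal.ofReal (1 - π₀) • ν) (Set.Ici η) := by
  rw [Measure.add_apply, Measure.smul_apply, smul_eq_mul, volume_restrict_unitInterval_Ici hη,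
    ENNReal.ofReal_mul hπ₀]
  exact le_self_add

theorem quantile_estimator_asymptotic_upper_bound_general
    {Ω : Type*} [MeasureSpace Ω] [IsProbabilityMeasure (ℙ : Measure Ω)]
    (p : ℕ → Ω → ℝ) (hmeas : ∀ i, Measurable (p i))
    (π₀ : ℝ) (hπ : π₀ ∈ Set.Icc (0:ℝ) 1)
    (ν : Measure ℝ)
    (hindep : iIndepFun p ℙ)
    (hlaw : ∀ i, Measure.map (p i) ℙ
        = ENNReal.ofReal π₀ • ((volume : Measure ℝ).restrict (Set.Icc 0 1))
          + ENNReal.ofReal (1 - π₀) • ν)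
    (η : ℝ) (hη : η ∈ Set.Ioo (0:ℝ) 1) :
    ∀ᵐ ω ∂(ℙ : Measure Ω), π₀ ≤ Filter.liminf
      (fun m : ℕ =>
        min 1 ((∑ i ∈ Finset.range m, if η ≤ p i ω then (1:ℝ) else 0) / (m * (1 - η))))
      atTop := by
  obtain ⟨hπ₀, hπ₁⟩ := hπ
  obtain ⟨hη₀, hη₁⟩ := hη
  have hmass : π₀ * (1 - η) ≤ (Measure.map (p 0) ℙ).real (Set.Ici η) := by
    rw [measureReal_def, ← ENNReal.ofReal_le_iff_le_toReal (measure_ne_top _ _), hlaw 0]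
    exact ofReal_mul_le_mixture_Ici hπ₀ hη₀.le ν
  filter_upwards [ae_tendsto_empirical_frequency hmeas (fun i j hij => hindep.indepFun hij)
    (fun i => (hlaw i).trans (hlaw 0).symm) measurableSet_Ici] with ω hω
  have hlim := tendsto_const_nhds (x := (1 : ℝ)).min (hω.div_const (1 - η))
  simp only [div_div, Set.indicator_apply, Set.mem_Ici, Pi.one_apply] at hlim
  rw [hlim.liminf_eq]
  exact le_min hπ₁ ((le_div_iff₀ (sub_pos.2 hη₁)).2 hmass)

/-- With `p₁, p₂, …` i.i.d. from the mixture
`π₀·Uniform(0,1) + (1−π₀)·F_{p*}` and `η ∈ (0,1)`, the quantile estimator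
`π̃₀^{(m)} = min(1, (Σ_{i<m} 1{pᵢ ≥ η}) / (m(1−η)))` satisfies
`liminf_{m→∞} π̃₀^{(m)} ≥ π₀` almost surely. -/
theorem quantile_estimator_asymptotic_upper_bound
    {Ω : Type*} [MeasureSpace Ω] [IsProbabilityMeasure (ℙ : Measure Ω)]
    (p : ℕ → Ω → ℝ) (hmeas : ∀ i, Measurable (p i))
    (π₀ : ℝ) (hπ : π₀ ∈ Set.Icc (0:ℝ) 1)
    (ν : Measure ℝ) [IsProbabilityMeasure ν] (hνsupp : ν (Set.Icc (0:ℝ) 1) = 1)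
    (hindep : iIndepFun p ℙ)
    (hlaw : ∀ i, Measure.map (p i) ℙ
        = ENNReal.ofReal π₀ • ((volume : Measure ℝ).restrict (Set.Icc 0 1))
          + ENNReal.ofReal (1 - π₀) • ν)
    (η : ℝ) (hη : η ∈ Set.Ioo (0:ℝ) 1) :
    ∀ᵐ ω ∂(ℙ : Measure Ω), π₀ ≤ Filter.liminf
      (fun m : ℕ =>
        min 1 ((∑ i ∈ Finset.range m, if η ≤ p i ω then (1:ℝ) else 0) / (m * (1 - η))))
      atTop :=
  quantile_estimator_asymptotic_upper_bound_general p hmeas π₀ hπ ν hindep hlaw η hη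
end

section
/- (Proposition 1 core identity) In the K-group non-exchangeable model, for each test k in group d, E[ u_k* · 1{wlr_k* ≥ t} | d ] = π_{d,0} · (1 − F_{d,wlr*}(t)), where u_k* is the posterior null probability, wlr*(z; d) = ((1−π_{d,0})/π_{d,0}) · f_{d,1}(z)/f_{d,0}(z) is the weighted likelihood ratio, and F_{d,wlr*} is the null-conditional CDF of wlr* in group d. -/
open MeasureTheory

/-! The posterior null probability times the marginal density is the joint density of
"null and `z`": `u*(z) · (π f₀ + (1-π) f₁)(z) = π f₀(z)` pointwise, so integrating over
`{wlr ≥ t}` gives `π` times the null mass of that set. -/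

lemma one_div_one_add_wlr_mul_marginal {π a b : ℝ} (hπ₀ : 0 < π) (hπ₁ : π ≤ 1)
    (ha : 0 < a) (hb : 0 ≤ b) :
    1 / (1 + (1 - π) / π * (b / a)) * (π * a + (1 - π) * b) = π * a := by
  have hmarginal : 0 < π * a + (1 - π) * b := by
    have : 0 ≤ (1 - π) * b := mul_nonneg (by linarith) hb
    positivity
  have hodds : 1 + (1 - π) / π * (b / a) = (π * a + (1 - π) * b) / (π * a) := by
    field_simp
  rw [hodds, one_div_div, div_mul_cancel₀ _ hmarginal.ne']

theorem prop1_core_identity_general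
    (π : ℝ) (hπ : π ∈ Set.Ioo (0:ℝ) 1)
    (f₀ f₁ : ℝ → ℝ) (hf₀ : ∀ z, 0 < f₀ z) (hf₁ : ∀ z, 0 ≤ f₁ z)
    (wlr u fc : ℝ → ℝ)
    (hwlr : ∀ z, wlr z = (1 - π) / π * (f₁ z / f₀ z))
    (hu : ∀ z, u z = 1 / (1 + wlr z))
    (hfc : ∀ z, fc z = π * f₀ z + (1 - π) * f₁ z)
    (t : ℝ) :
    ∫ z in {z' | t ≤ wlr z'}, u z * fc z = π * ∫ z in {z' | t ≤ wlr z'}, f₀ z := by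
  have hjoint : ∀ z, u z * fc z = π * f₀ z := fun z => by
    rw [hu, hwlr, hfc]
    exact one_div_one_add_wlr_mul_marginal hπ.1 hπ.2.le (hf₀ z) (hf₁ z)
  simp only [hjoint, integral_const_mul]

/-- Proposition 1 core identity: In one group of the non-exchangeable
model with null proportion `π`, null/alternative densities `f₀, f₁`, weighted likelihood
ratio `wlr(z) = ((1−π)/π)·f₁(z)/f₀(z)` and posterior null probability
`u*(z) = 1/(1+wlr(z))`, for any threshold `t`:
`E[u*(Z)·1{wlr(Z) ≥ t}] = π·(1 − F_{wlr}(t))`, where the expectation is against the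
marginal density `f_c = π f₀ + (1−π) f₁` and `1 − F_{wlr}(t)` is the null probability
of `{wlr ≥ t}`. -/
theorem prop1_core_identity
    (π : ℝ) (hπ : π ∈ Set.Ioo (0:ℝ) 1)
    (f₀ f₁ : ℝ → ℝ) (hf₀ : ∀ z, 0 < f₀ z) (hf₁ : ∀ z, 0 ≤ f₁ z)
    (hm₀ : Measurable f₀) (hm₁ : Measurable f₁)
    (wlr u fc : ℝ → ℝ)
    (hwlr : ∀ z, wlr z = (1 - π) / π * (f₁ z / f₀ z))
    (hu : ∀ z, u z = 1 / (1 + wlr z))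
    (hfc : ∀ z, fc z = π * f₀ z + (1 - π) * f₁ z)
    (t : ℝ) :
    ∫ z in {z' | t ≤ wlr z'}, u z * fc z = π * ∫ z in {z' | t ≤ wlr z'}, f₀ z :=
  prop1_core_identity_general π hπ f₀ f₁ hf₀ hf₁ wlr u fc hwlr hu hfc t
end

section
/- In the two-groups model, the decision rule δᵢ = 1{uᵢ ≤ t} thresholding posterior null probabilities minimizes the posterior expected number of false negatives E[Σᵢ(1−δᵢ)γᵢ | z] among all deterministic rules δ ∈ {0,1}^m satisfying the posterior-FDR constraint (Σᵢ uᵢδᵢ)/max(1, Σᵢ δᵢ) ≤ α, whenever (Σ_{uᵢ ≤ t} uᵢ)/max(1, #{i: uᵢ ≤ t}) ≤ α and t is chosen maximal with this property: no rule rejecting strictly more hypotheses satisfies the constraint, and among rules rejecting the same number, the threshold rule has minimal posterior expected false negatives. -/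
/-- Number of rejections of a deterministic decision rule `δ`. -/
def nReject {m : ℕ} (δ : Fin m → Bool) : ℝ := ∑ i, if δ i then (1:ℝ) else 0

/-- Bayesian (posterior) FDR of a decision rule `δ`:
`(Σᵢ uᵢ δᵢ)/max(1, Σᵢ δᵢ)`. -/
noncomputable def bfdrOf {m : ℕ} (u : Fin m → ℝ) (δ : Fin m → Bool) : ℝ :=
  (∑ i, if δ i then u i else 0) / max 1 (nReject δ)

/-- Posterior expected number of false negatives of `δ`:
`E[Σᵢ (1−δᵢ) γᵢ | z] = Σᵢ (1−δᵢ)(1−uᵢ)`. -/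
noncomputable def efnOf {m : ℕ} (u : Fin m → ℝ) (δ : Fin m → Bool) : ℝ :=
  ∑ i, if δ i then 0 else (1 - u i)

/-!
Writing `EFN(δ) = Σᵢ (1 - uᵢ) - Σ_{δᵢ = 1} (1 - uᵢ)`, minimizing false negatives means maximizing
the weight `1 - uᵢ` of the rejected set. The threshold set `{uᵢ ≤ t}` is a superlevel set of these
weights, so an exchange argument shows it beats every set of no larger size: each element of
`T \ S` weighs at most `1 - t`, and can be matched with a distinct element of `S \ T` weighing at
least `1 - t`; the unmatched rest of `S \ T` has nonnegative weight since `uᵢ ≤ 1`. By maximality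
of `t`, every rule meeting the FDR constraint rejects no more hypotheses than the threshold rule.
-/

open Finset

theorem Finset.sum_le_sum_of_card_le_of_separated {ι M : Type*} [DecidableEq ι]
    [AddCommMonoid M] [PartialOrder M] [IsOrderedAddMonoid M] {f : ι → M} {s t : Finset ι}
    {c : M} (hcard : #t ≤ #s) (hts : ∀ i ∈ t \ s, f i ≤ c) (hs : ∀ i ∈ s, c ≤ f i)
    (hs₀ : ∀ i ∈ s, 0 ≤ f i) : ∑ i ∈ t, f i ≤ ∑ i ∈ s, f i := by
  obtain ⟨r, hrs, hr⟩ := exists_subset_card_eq (card_sdiff_le_card_sdiff_iff.2 hcard)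
  calc ∑ i ∈ t, f i = ∑ i ∈ s ∩ t, f i + ∑ i ∈ t \ s, f i := by
        rw [inter_comm, sum_inter_add_sum_sdiff]
    _ ≤ ∑ i ∈ s ∩ t, f i + #r • c := by
        grw [sum_le_card_nsmul _ _ _ hts, hr]
    _ ≤ ∑ i ∈ s ∩ t, f i + ∑ i ∈ s \ t, f i := by
        grw [card_nsmul_le_sum _ _ _ fun i hi ↦ hs i (mem_sdiff.1 (hrs hi)).1,
          sum_le_sum_of_subset_of_nonneg hrs fun i hi _ ↦ hs₀ i (mem_sdiff.1 hi).1]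
    _ = ∑ i ∈ s, f i := sum_inter_add_sum_sdiff _ _ _

variable {m : ℕ}

def rejectionSet (δ : Fin m → Bool) : Finset (Fin m) := {i | δ i}

theorem nReject_eq_card (δ : Fin m → Bool) : nReject δ = #(rejectionSet δ) := by
  simp [nReject, rejectionSet, sum_boole]

theorem efnOf_eq_sub (u : Fin m → ℝ) (δ : Fin m → Bool) :
    efnOf u δ = ∑ i, (1 - u i) - ∑ i ∈ rejectionSet δ, (1 - u i) := by
  rw [rejectionSet, sum_filter, ← sum_sub_distrib]
  exact sum_congr rfl fun i _ ↦ by cases δ i <;> simp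

theorem efnOf_threshold_le_of_nReject_le (u : Fin m → ℝ) (hu : ∀ i, u i ≤ 1) {t : ℝ}
    {δt : Fin m → Bool} (hδt : ∀ i, δt i = true ↔ u i ≤ t) {δ : Fin m → Bool}
    (hle : nReject δ ≤ nReject δt) : efnOf u δt ≤ efnOf u δ := by
  have hmem : ∀ i, i ∈ rejectionSet δt ↔ u i ≤ t := by simp [rejectionSet, hδt]
  rw [nReject_eq_card, nReject_eq_card, Nat.cast_le] at hle
  have := sum_le_sum_of_card_le_of_separated (f := fun i ↦ 1 - u i) (c := 1 - t) hle
    (fun i hi ↦ by linarith [not_le.1 ((hmem i).not.1 (mem_sdiff.1 hi).2)])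
    (fun i hi ↦ by linarith [(hmem i).1 hi]) (fun i _ ↦ by linarith [hu i])
  rw [efnOf_eq_sub, efnOf_eq_sub]
  linarith

theorem threshold_rule_optimal_general {m : ℕ} (u : Fin m → ℝ)
    (h01 : ∀ i, u i ∈ Set.Icc (0:ℝ) 1)
    (t α : ℝ) (δt : Fin m → Bool) (hδt : ∀ i, δt i = true ↔ u i ≤ t)
    (hmax : ∀ δ : Fin m → Bool, nReject δt < nReject δ → ¬ bfdrOf u δ ≤ α) :
    (∀ δ : Fin m → Bool, bfdrOf u δ ≤ α → efnOf u δt ≤ efnOf u δ) ∧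
      (∀ δ : Fin m → Bool, nReject δ = nReject δt → efnOf u δt ≤ efnOf u δ) := by
  have optimal := fun δ ↦ efnOf_threshold_le_of_nReject_le u (fun i ↦ (h01 i).2) hδt (δ := δ)
  exact ⟨fun δ hα ↦ optimal δ (not_lt.1 fun hlt ↦ hmax δ hlt hα),
    fun δ heq ↦ optimal δ heq.le⟩

/-- In the two-groups model, the threshold rule `δᵢ = 1{uᵢ ≤ t}` on
posterior null probabilities minimizes the posterior expected number of false negatives
among all deterministic rules satisfying the posterior-FDR constraint `BFDR(δ) ≤ α`,
whenever the threshold rule itself satisfies the constraint and `t` is maximal in the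
sense that no rule rejecting strictly more hypotheses satisfies the constraint; moreover,
among rules rejecting the same number of hypotheses, the threshold rule has minimal
posterior expected false negatives. -/
theorem threshold_rule_optimal {m : ℕ} (u : Fin m → ℝ)
    (h01 : ∀ i, u i ∈ Set.Icc (0:ℝ) 1)
    (t α : ℝ) (δt : Fin m → Bool) (hδt : ∀ i, δt i = true ↔ u i ≤ t)
    (hcon : bfdrOf u δt ≤ α)
    (hmax : ∀ δ : Fin m → Bool, nReject δt < nReject δ → ¬ bfdrOf u δ ≤ α) :
    (∀ δ : Fin m → Bool, bfdrOf u δ ≤ α → efnOf u δt ≤ efnOf u δ) ∧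
      (∀ δ : Fin m → Bool, nReject δ = nReject δt → efnOf u δt ≤ efnOf u δ) :=
  threshold_rule_optimal_general u h01 t α δt hδt hmax
end
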